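/- arXiv:2306.04200 — 5 statements merged into one kernel-verified Lean document; each statement's English description precedes it below -/
import Mathlib

section
/- Let R ≅ R₁ × R₂ × ⋯ × Rₙ (n ≥ 2) be an Artinian non-local commutative ring, where each Rᵢ is a local ring, and assume R is not a product of two fields. Then the prime ideal sum graph PIS(R) is connected with diameter exactly 2. -/
/-!
The maximal ideals of `∏ Rᵢ` are the `Mᵢ = {x | xᵢ ∈ 𝔪ᵢ}`, and every proper ideal lies in one of
them. Two ideals below a common `Mᵢ` are at distance at most 2 through `Mᵢ`. Otherwise `I ≤ Mᵢ`,
`J ≤ Mⱼ`, `I ⊄ Mⱼ`, `J ⊄ Mᵢ`, and `Mᵢ ⊓ Mⱼ` is a common neighbour, since `I + Mᵢ ⊓ Mⱼ = Mᵢ` and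
`J + Mᵢ ⊓ Mⱼ = Mⱼ`; this vertex is nonzero precisely because the ring is not a product of two
fields. Distinct `Mᵢ`, `Mⱼ` are comaximal, hence not adjacent, so the diameter is exactly 2.
-/

open SimpleGraph

/-- The prime ideal sum graph of a commutative ring: vertices are the nonzero
proper ideals, and distinct `I`, `J` are adjacent iff `I + J` is a prime ideal. -/
def PIS (R : Type*) [CommRing R] :
    SimpleGraph {I : Ideal R // I ≠ ⊥ ∧ I ≠ ⊤} where
  Adj I J := I ≠ J ∧ (I.1 + J.1).IsPrime
  symm := by
    constructor
    rintro I J ⟨hne, hp⟩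
    exact ⟨hne.symm, by rwa [add_comm]⟩
  loopless := by constructor; rintro I ⟨hne, -⟩; exact hne rfl

open IsLocalRing

lemma SimpleGraph.connected_and_ediam_eq_two {V : Type*} {G : SimpleGraph V}
    (h : ∀ u v, G.edist u v ≤ 2) {u v : V} (huv : u ≠ v) (hadj : ¬ G.Adj u v) :
    G.Connected ∧ G.ediam = 2 := by
  have hdiam : G.ediam ≤ 2 := ediam_le_of_edist_le h
  have : Nonempty V := ⟨u⟩
  refine ⟨G.connected_of_ediam_ne_top (ne_top_of_le_ne_top (by decide) hdiam),
    le_antisymm hdiam (le_trans ?_ (edist_le_ediam (u := u) (v := v)))⟩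
  have : ¬ G.edist u v ≤ 1 := by simp [edist_le_one_iff_adj_or_eq, hadj, huv]
  rw [← one_add_one_eq_two]
  exact Order.add_one_le_of_lt (not_le.mp this)

-- `I ⊔ (P ⊓ m) = (I ⊔ m) ⊓ P` by the modular law, and `I ⊔ m = ⊤`.
lemma Ideal.sup_inf_eq_of_le_of_not_le {R : Type*} [CommRing R] {I P m : Ideal R}
    [hm : m.IsMaximal] (hIP : I ≤ P) (hIm : ¬ I ≤ m) : I ⊔ P ⊓ m = P := by
  rw [inf_comm, ← sup_inf_assoc_of_le m hIP, sup_comm,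
    (hm.out.not_le_iff_codisjoint.mp hIm).eq_top, top_inf_eq]

namespace PIS

variable {R : Type*} [CommRing R] {u v w : {I : Ideal R // I ≠ ⊥ ∧ I ≠ ⊤}}

lemma edist_le_one_of_isPrime_add (h : (u.1 + v.1).IsPrime) : (PIS R).edist u v ≤ 1 := by
  rw [edist_le_one_iff_adj_or_eq]
  by_cases huv : u = v
  · exact Or.inr huv
  · exact Or.inl ⟨huv, h⟩

lemma edist_le_two_of_isPrime_add (huw : (u.1 + w.1).IsPrime) (hwv : (w.1 + v.1).IsPrime) :
    (PIS R).edist u v ≤ 2 :=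
  calc (PIS R).edist u v ≤ (PIS R).edist u w + (PIS R).edist w v := SimpleGraph.edist_triangle
    _ ≤ 1 + 1 := add_le_add (edist_le_one_of_isPrime_add huw) (edist_le_one_of_isPrime_add hwv)
    _ = 2 := one_add_one_eq_two

lemma edist_le_two_of_le (hw : w.1.IsPrime) (hu : u.1 ≤ w.1) (hv : v.1 ≤ w.1) :
    (PIS R).edist u v ≤ 2 :=
  edist_le_two_of_isPrime_add (w := w) (by rwa [Ideal.add_eq_sup, sup_eq_right.mpr hu])
    (by rwa [Ideal.add_eq_sup, sup_eq_left.mpr hv])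

lemma ne_and_not_adj_of_add_eq_top (h : u.1 + v.1 = ⊤) : u ≠ v ∧ ¬ (PIS R).Adj u v := by
  refine ⟨?_, fun hadj => hadj.2.ne_top h⟩
  rintro rfl
  exact u.2.2 (by simpa using h)

end PIS

section PiLocal

variable {ι : Type*} {R : ι → Type*} [∀ i, CommRing (R i)] [∀ i, IsLocalRing (R i)]

variable (R) in
def piMaximalIdeal (i : ι) : Ideal (∀ i, R i) :=
  (maximalIdeal (R i)).comap (Pi.evalRingHom R i)

lemma mem_piMaximalIdeal {i : ι} {x : ∀ i, R i} :
    x ∈ piMaximalIdeal R i ↔ x i ∈ maximalIdeal (R i) := Iff.rfl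

instance piMaximalIdeal.isMaximal (i : ι) : (piMaximalIdeal R i).IsMaximal :=
  Ideal.comap_isMaximal_of_surjective _ (Function.surjective_eval i)

lemma single_mem_piMaximalIdeal_of_ne [DecidableEq ι] {i k : ι} (hki : k ≠ i) (m : R k) :
    Pi.single k m ∈ piMaximalIdeal R i := by
  simp [mem_piMaximalIdeal, Pi.single_eq_of_ne hki.symm]

lemma single_mem_piMaximalIdeal [DecidableEq ι] {k : ι} {m : R k} (hm : m ∈ maximalIdeal (R k))
    (i : ι) : Pi.single k m ∈ piMaximalIdeal R i := by
  rcases eq_or_ne k i with rfl | hki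
  · simpa [mem_piMaximalIdeal] using hm
  · exact single_mem_piMaximalIdeal_of_ne hki m

lemma piMaximalIdeal_ne_bot [Nontrivial ι] (i : ι) : piMaximalIdeal R i ≠ ⊥ := by
  classical
  obtain ⟨k, hki⟩ := exists_ne i
  rw [Submodule.ne_bot_iff]
  exact ⟨Pi.single k 1, single_mem_piMaximalIdeal_of_ne hki 1, by simp⟩

lemma piMaximalIdeal_sup_eq_top {i j : ι} (hij : i ≠ j) :
    piMaximalIdeal R i ⊔ piMaximalIdeal R j = ⊤ := by
  classical
  rw [Ideal.eq_top_iff_one, ← sub_add_cancel 1 (Pi.single i 1)]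
  refine Ideal.add_mem _ (Ideal.mem_sup_left ?_) (Ideal.mem_sup_right ?_)
  · simp [mem_piMaximalIdeal]
  · exact single_mem_piMaximalIdeal_of_ne hij 1

-- Prime avoidance: a non-unit of `∏ R i` is a non-unit in some coordinate.
lemma exists_le_piMaximalIdeal [Finite ι] {I : Ideal (∀ i, R i)} (hI : I ≠ ⊤) :
    ∃ i, I ≤ piMaximalIdeal R i := by
  have := Fintype.ofFinite ι
  have hcover : (I : Set (∀ i, R i)) ⊆ ⋃ i ∈ (Finset.univ : Finset ι), piMaximalIdeal R i := by
    intro x hx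
    have hx : ¬ IsUnit x := fun hu => hI (Ideal.eq_top_of_isUnit_mem I hx hu)
    obtain ⟨i, hi⟩ := not_forall.mp (mt Pi.isUnit_iff.mpr hx)
    exact Set.mem_biUnion (Finset.mem_coe.mpr (Finset.mem_univ i)) ((mem_maximalIdeal _).mpr hi)
  obtain ⟨i₀, -⟩ := Set.mem_iUnion₂.mp (hcover I.zero_mem)
  obtain ⟨i, -, hi⟩ := (Ideal.subset_union_prime i₀ i₀ fun i _ _ _ => inferInstance).mp hcover
  exact ⟨i, hi⟩

lemma piMaximalIdeal_inf_ne_bot [Finite ι] {i j : ι}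
    (h : 2 < Nat.card ι ∨ ∃ k, ¬ IsField (R k)) :
    piMaximalIdeal R i ⊓ piMaximalIdeal R j ≠ ⊥ := by
  classical
  have := Fintype.ofFinite ι
  rw [Submodule.ne_bot_iff]
  rcases h with hcard | ⟨k, hk⟩
  · obtain ⟨k, -, hk⟩ := Finset.exists_mem_notMem_of_card_lt_card (s := {i, j})
      (t := Finset.univ) (by simpa [Nat.card_eq_fintype_card] using
        Finset.card_le_two.trans_lt hcard)
    simp only [Finset.mem_insert, Finset.mem_singleton, not_or] at hk
    exact ⟨Pi.single k 1, ⟨single_mem_piMaximalIdeal_of_ne hk.1 1,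
      single_mem_piMaximalIdeal_of_ne hk.2 1⟩, by simp⟩
  · obtain ⟨m, hm, hm0⟩ := (Submodule.ne_bot_iff _).mp
      (mt isField_iff_maximalIdeal_eq.mpr hk)
    exact ⟨Pi.single k m, ⟨single_mem_piMaximalIdeal hm i, single_mem_piMaximalIdeal hm j⟩,
      by simpa using hm0⟩

variable (R) in
def PIS.piMaximalIdealVertex [Nontrivial ι] (i : ι) : {I : Ideal (∀ i, R i) // I ≠ ⊥ ∧ I ≠ ⊤} :=
  ⟨piMaximalIdeal R i, piMaximalIdeal_ne_bot i, Ideal.IsMaximal.ne_top inferInstance⟩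

lemma PIS.pi_edist_le_two [Finite ι] [Nontrivial ι]
    (h : 2 < Nat.card ι ∨ ∃ k, ¬ IsField (R k)) (u v : {I : Ideal (∀ i, R i) // I ≠ ⊥ ∧ I ≠ ⊤}) :
    (PIS (∀ i, R i)).edist u v ≤ 2 := by
  obtain ⟨i, hui⟩ := exists_le_piMaximalIdeal u.2.2
  obtain ⟨j, hvj⟩ := exists_le_piMaximalIdeal v.2.2
  by_cases hvi : v.1 ≤ piMaximalIdeal R i
  · exact edist_le_two_of_le (w := piMaximalIdealVertex R i)
      (piMaximalIdeal.isMaximal i).isPrime hui hvi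
  by_cases huj : u.1 ≤ piMaximalIdeal R j
  · exact edist_le_two_of_le (w := piMaximalIdealVertex R j)
      (piMaximalIdeal.isMaximal j).isPrime huj hvj
  let W : {I : Ideal (∀ i, R i) // I ≠ ⊥ ∧ I ≠ ⊤} :=
    ⟨piMaximalIdeal R i ⊓ piMaximalIdeal R j, piMaximalIdeal_inf_ne_bot h,
      ne_top_of_le_ne_top (piMaximalIdealVertex R i).2.2 inf_le_left⟩
  refine edist_le_two_of_isPrime_add (w := W) ?_ ?_
  · change (u.1 ⊔ piMaximalIdeal R i ⊓ piMaximalIdeal R j).IsPrime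
    rw [Ideal.sup_inf_eq_of_le_of_not_le hui huj]
    infer_instance
  · change (piMaximalIdeal R i ⊓ piMaximalIdeal R j ⊔ v.1).IsPrime
    rw [sup_comm, inf_comm, Ideal.sup_inf_eq_of_le_of_not_le hvj hvi]
    infer_instance

end PiLocal

theorem pis_connected_and_ediam_eq_two_general {n : ℕ} (hn : 2 ≤ n)
    (R : Fin n → Type*) [∀ i, CommRing (R i)] [∀ i, IsLocalRing (R i)]
    (hnf : ¬ (n = 2 ∧ ∀ i, IsField (R i))) :
    (PIS (∀ i, R i)).Connected ∧ (PIS (∀ i, R i)).ediam = 2 := by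
  have : Nontrivial (Fin n) := Fin.nontrivial_iff_two_le.mpr hn
  have hR : 2 < Nat.card (Fin n) ∨ ∃ k, ¬ IsField (R k) := by
    rw [Nat.card_eq_fintype_card, Fintype.card_fin]
    by_contra! h
    exact hnf ⟨by omega, h.2⟩
  obtain ⟨i, j, hij⟩ := exists_pair_ne (Fin n)
  obtain ⟨hne, hnadj⟩ := PIS.ne_and_not_adj_of_add_eq_top (u := PIS.piMaximalIdealVertex R i)
    (v := PIS.piMaximalIdealVertex R j) (piMaximalIdeal_sup_eq_top hij)
  exact SimpleGraph.connected_and_ediam_eq_two (PIS.pi_edist_le_two hR) hne hnadj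

/-- If `R ≅ R₁ × ⋯ × Rₙ` (`n ≥ 2`) is an Artinian non-local commutative ring
(each `Rᵢ` local) which is not a product of two fields, then `PIS(R)` is
connected with diameter exactly `2`. -/
theorem pis_connected_and_ediam_eq_two {n : ℕ} (hn : 2 ≤ n)
    (R : Fin n → Type*) [∀ i, CommRing (R i)] [∀ i, IsLocalRing (R i)]
    [∀ i, IsArtinianRing (R i)]
    (hnf : ¬ (n = 2 ∧ ∀ i, IsField (R i))) :
    (PIS (∀ i, R i)).Connected ∧ (PIS (∀ i, R i)).ediam = 2 :=
  pis_connected_and_ediam_eq_two_general hn R hnf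
end

section
/- Let R ≅ F₁ × F₂ × ⋯ × Fₙ (n ≥ 3) be a product of fields. Then the clique number of PIS(R) equals n. -/
open SimpleGraph

/-!
An ideal of `∏ Fᵢ` is determined by the set of coordinates on which it vanishes, the sum of
two ideals vanishes on the intersection of these sets, and the prime ideals are exactly those
vanishing on a single coordinate. So the zero sets of a clique of `PIS(R)` form a family of
nonempty subsets of `{1, …, n}` any two of which meet in exactly one point, and there are at
most `n` of them by the nonuniform Fisher inequality. Conversely the zero sets `{a, k}`, for a
fixed `a` and `k` ranging over all coordinates, give a clique of size `n`; they are proper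
subsets (so the ideals are nonzero) because `n ≥ 3`.
-/

open Finset

lemma eq_zero_of_sum_add_mul_eq_zero {ι R : Type*} [Fintype ι] [Field R] [LinearOrder R]
    [IsStrictOrderedRing R] {g d : ι → R} (hd : ∀ i, 0 ≤ d i) (hd₀ : {i | d i = 0}.Subsingleton)
    (h : ∀ i, ∑ j, g j + g i * d i = 0) (i : ι) : g i = 0 := by
  set σ := ∑ j, g j
  have hquad : σ ^ 2 + ∑ j, g j ^ 2 * d j = 0 :=
    calc σ ^ 2 + ∑ j, g j ^ 2 * d j = ∑ j, g j * (σ + g j * d j) := by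
          simp only [mul_add, sum_add_distrib, ← sum_mul, σ]; ring_nf
      _ = 0 := sum_eq_zero fun j _ => by rw [h j, mul_zero]
  have hσ : σ = 0 := by
    have := sum_nonneg fun j (_ : j ∈ univ) => mul_nonneg (sq_nonneg (g j)) (hd j)
    nlinarith [sq_nonneg σ]
  have hgd (j : ι) : g j * d j = 0 := by linarith [h j]
  by_cases hi : d i = 0
  · rw [← hσ]
    refine (sum_eq_single i (fun j _ hji => ?_) (by simp)).symm
    exact (mul_eq_zero.1 (hgd j)).resolve_right fun hj => hji (hd₀ hj hi)
  · exact (mul_eq_zero.1 (hgd i)).resolve_right hi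

/-- The Gram matrix of the indicator vectors of the members of `s` is `J + diag (#T - 1)`, which
is positive definite because at most one member of `s` is a singleton. -/
theorem Finset.card_le_univ_of_pairwise_inter_eq_singleton {α : Type*} [Fintype α]
    [DecidableEq α] {s : Finset (Finset α)} (hne : ∀ T ∈ s, T.Nonempty)
    (hinter : (s : Set (Finset α)).Pairwise fun T U => ∃ a, T ∩ U = {a}) :
    #s ≤ Fintype.card α := by
  let v : s → α → ℚ := fun T i => if i ∈ T.1 then 1 else 0
  have hv (T U : s) : v T ⬝ᵥ v U = #(T.1 ∩ U.1) := by
    simp [v, dotProduct, ← filter_mem_eq_inter, inter_comm U.1]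
  have hTU (T U : s) : (#(T.1 ∩ U.1) : ℚ) = 1 + if T = U then (#U.1 : ℚ) - 1 else 0 := by
    split_ifs with h
    · simp [h]
    · obtain ⟨a, ha⟩ := hinter T.2 U.2 (Subtype.coe_injective.ne h)
      simp [ha]
  suffices LinearIndependent ℚ v by simpa using this.fintype_card_le_finrank
  rw [Fintype.linearIndependent_iff]
  intro g hg
  refine eq_zero_of_sum_add_mul_eq_zero (d := fun T => (#T.1 : ℚ) - 1) (fun T => ?_) ?_ fun U => ?_
  · have := (hne T T.2).card_pos
    simp only [sub_nonneg, Nat.one_le_cast]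
    omega
  · intro T hT U hU
    obtain ⟨a, ha⟩ := card_eq_one.1 (by exact_mod_cast sub_eq_zero.1 hT : #T.1 = 1)
    obtain ⟨b, hb⟩ := card_eq_one.1 (by exact_mod_cast sub_eq_zero.1 hU : #U.1 = 1)
    by_contra hTU'
    obtain ⟨c, hc⟩ := hinter T.2 U.2 (Subtype.coe_injective.ne hTU')
    have hab : c ∈ T.1 ∩ U.1 := hc ▸ mem_singleton_self c
    simp only [ha, hb, mem_inter, mem_singleton] at hab
    exact hTU' (Subtype.ext (by rw [ha, hb, ← hab.1, hab.2]))
  · simpa only [sum_dotProduct, smul_dotProduct, hv, hTU, smul_eq_mul, mul_add, mul_ite,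
      mul_zero, sum_add_distrib, sum_ite_eq', mem_univ, if_true, mul_one, zero_dotProduct]
      using congrArg (· ⬝ᵥ v U) hg

open Classical in
noncomputable def IsSimpleOrder.piOrderIsoFinset {ι : Type*} [Fintype ι] {α : ι → Type*}
    [∀ i, PartialOrder (α i)] [∀ i, BoundedOrder (α i)] [∀ i, IsSimpleOrder (α i)] :
    (∀ i, α i) ≃o Finset ι where
  toFun f := {i | f i = ⊤}
  invFun s i := if i ∈ s then ⊤ else ⊥
  left_inv f := funext fun i => by rcases eq_bot_or_eq_top (f i) with h | h <;> simp [h]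
  right_inv s := by ext i; simp
  map_rel_iff' {f g} := by
    simp only [Equiv.coe_fn_mk, subset_iff, mem_filter, mem_univ, true_and, Pi.le_def]
    refine forall_congr' fun i => ⟨fun h => ?_, fun h hf => top_le_iff.1 (hf ▸ h)⟩
    rcases eq_bot_or_eq_top (f i) with hf | hf
    · exact hf ▸ bot_le
    · exact (h hf).symm ▸ le_top

section PiField

variable {ι : Type*} [Fintype ι] {F : ι → Type*} [∀ i, Field (F i)]

/-- Sends an ideal to the set of coordinates on which it is the whole field. -/
noncomputable def Ideal.piFieldOrderIso : Ideal (∀ i, F i) ≃o Finset ι :=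
  Ideal.piOrderIso.trans IsSimpleOrder.piOrderIsoFinset

instance : Finite (Ideal (∀ i, F i)) := .of_equiv _ Ideal.piFieldOrderIso.toEquiv.symm

theorem Ideal.isPrime_iff_exists_piFieldOrderIso_eq [DecidableEq ι] {I : Ideal (∀ i, F i)} :
    I.IsPrime ↔ ∃ a, piFieldOrderIso I = {a}ᶜ := by
  rw [IsArtinianRing.isPrime_iff_isMaximal, isMaximal_def, ← OrderIso.isCoatom_iff piFieldOrderIso,
    Finset.isCoatom_iff]

namespace PIS

variable [DecidableEq ι]

noncomputable def zeroSet (I : {I : Ideal (∀ i, F i) // I ≠ ⊥ ∧ I ≠ ⊤}) : Finset ι :=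
  (Ideal.piFieldOrderIso I.1)ᶜ

lemma zeroSet_injective : Function.Injective (zeroSet (F := F)) := fun _ _ h =>
  Subtype.ext (Ideal.piFieldOrderIso.injective (compl_injective h))

lemma zeroSet_nonempty (I : {I : Ideal (∀ i, F i) // I ≠ ⊥ ∧ I ≠ ⊤}) : (zeroSet I).Nonempty := by
  rw [zeroSet, nonempty_iff_ne_empty, Ne, compl_eq_empty_iff, ← top_eq_univ, map_eq_top_iff]
  exact I.2.2

lemma exists_zeroSet_eq {T : Finset ι} (hT : T.Nonempty) (hT' : T ≠ univ) :
    ∃ I : {I : Ideal (∀ i, F i) // I ≠ ⊥ ∧ I ≠ ⊤}, zeroSet I = T := by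
  refine ⟨⟨Ideal.piFieldOrderIso.symm Tᶜ, ?_, ?_⟩, by simp [zeroSet]⟩
  · rwa [Ne, map_eq_bot_iff, bot_eq_empty, compl_eq_empty_iff, ← Ne]
  · rw [Ne, map_eq_top_iff, top_eq_univ, compl_eq_univ_iff]
    exact hT.ne_empty

lemma adj_iff {I J : {I : Ideal (∀ i, F i) // I ≠ ⊥ ∧ I ≠ ⊤}} :
    (PIS (∀ i, F i)).Adj I J ↔ I ≠ J ∧ ∃ a, zeroSet I ∩ zeroSet J = {a} := by
  change _ ∧ _ ↔ _
  rw [Submodule.add_eq_sup, Ideal.isPrime_iff_exists_piFieldOrderIso_eq, map_sup]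
  refine and_congr_right' (exists_congr fun a => ?_)
  rw [zeroSet, zeroSet, ← compl_union, compl_eq_comm, eq_comm, sup_eq_union]

lemma card_le_of_isClique {s : Finset {I : Ideal (∀ i, F i) // I ≠ ⊥ ∧ I ≠ ⊤}}
    (hs : (PIS (∀ i, F i)).IsClique (s : Set _)) : #s ≤ Fintype.card ι := by
  rw [← card_image_of_injective s zeroSet_injective]
  refine card_le_univ_of_pairwise_inter_eq_singleton
    (forall_mem_image.2 fun I _ => zeroSet_nonempty I) ?_
  rw [coe_image, zeroSet_injective.injOn.pairwise_image]
  exact hs.imp fun _ _ h => (adj_iff.1 h).2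

lemma exists_isNClique_card (h : 3 ≤ Fintype.card ι) :
    ∃ s, (PIS (∀ i, F i)).IsNClique (Fintype.card ι) s := by
  obtain ⟨a⟩ : Nonempty ι := Fintype.card_pos_iff.1 (by omega)
  have hpair (k l : ι) (hkl : k ≠ l) : ({a, k} ∩ {a, l} : Finset ι) = {a} := by
    rw [← insert_inter_distrib, singleton_inter_of_notMem (by simpa using hkl), insert_empty]
  have hne (k : ι) : ({a, k} : Finset ι) ≠ univ := fun hk => by
    have := card_le_two (a := a) (b := k)
    rw [hk, card_univ] at this
    omega
  choose I hI using fun k => exists_zeroSet_eq (F := F) (insert_nonempty a {k}) (hne k)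
  have hinj : Function.Injective I := by
    refine .of_comp (f := zeroSet) fun k l hkl => ?_
    simp only [Function.comp_apply, hI] at hkl
    have hk : k ∈ ({a, l} : Finset ι) := hkl ▸ mem_insert_of_mem (mem_singleton_self k)
    have hl : l ∈ ({a, k} : Finset ι) := hkl ▸ mem_insert_of_mem (mem_singleton_self l)
    simp only [mem_insert, mem_singleton] at hk hl
    grind
  refine ⟨univ.image I, ?_, by rw [card_image_of_injective _ hinj, card_univ]⟩
  simp only [coe_image, coe_univ, Set.image_univ]
  rintro _ ⟨k, rfl⟩ _ ⟨l, rfl⟩ hkl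
  exact adj_iff.2 ⟨hkl, a, by rw [hI, hI, hpair k l fun h => hkl (h ▸ rfl)]⟩

theorem cliqueNum_pi_field (h : 3 ≤ Fintype.card ι) :
    (PIS (∀ i, F i)).cliqueNum = Fintype.card ι := by
  obtain ⟨s, hs⟩ := exists_isNClique_card (F := F) h
  obtain ⟨t, ht⟩ := (PIS (∀ i, F i)).exists_isNClique_cliqueNum
  exact le_antisymm (ht.card_eq ▸ card_le_of_isClique ht.isClique)
    (hs.card_eq ▸ hs.isClique.card_le_cliqueNum)

end PIS

end PiField

/-- In a product of `n ≥ 3` fields, the clique number of `PIS(R)` is `n`. -/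
theorem pis_cliqueNum_of_fields {n : ℕ} (hn : 3 ≤ n)
    (F : Fin n → Type*) [∀ i, Field (F i)] :
    (PIS (∀ i, F i)).cliqueNum = n := by
  simpa using PIS.cliqueNum_pi_field (F := F) (by simpa using hn)
end

section
/- Let R ≅ F₁ × F₂ × ⋯ × Fₙ (n ≥ 3) be a product of fields. Then the strong metric dimension of PIS(R) equals 2ⁿ − n − 2. -/
open SimpleGraph

/-- `w` strongly resolves `u` and `v`. -/
def StronglyResolves {V : Type*} (G : SimpleGraph V) (w u v : V) : Prop :=
  G.dist w v = G.dist w u + G.dist u v ∨ G.dist w u = G.dist w v + G.dist v u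

/-- A strong resolving set. -/
def IsStrongResolvingSet {V : Type*} (G : SimpleGraph V) (S : Set V) : Prop :=
  ∀ u v : V, u ≠ v → ∃ w ∈ S, StronglyResolves G w u v

/-- The strong metric dimension. -/
noncomputable def sdim {V : Type*} (G : SimpleGraph V) : ℕ∞ :=
  ⨅ S : {S : Set V // IsStrongResolvingSet G S}, S.1.encard

/-!
Taking zero sets identifies the ideals of `∏ i, F i` with the subsets of the index set `ι`
(reversing inclusion), and `I + J` is prime exactly when the zero sets of `I` and `J` meet in
a single point. So `PIS` is the graph on nonempty proper subsets of `ι` in which two sets are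
adjacent when they meet in exactly one point.

For `3 ≤ |ι|` any two non-adjacent sets have a common neighbour, so the diameter is two and a
non-adjacent pair is strongly resolved only by its own members: the complement of a strong
resolving set is a clique. A clique is a family of sets pairwise meeting in one point, so it
has at most `|ι|` members by the nonuniform Fisher inequality. The star `{{a, k} | k ∈ ι}` is
a clique of that size, and its complement is strongly resolving: `{a, k}` and `{a, l}` with
`l ≠ a` are separated by `{l}`.
-/

open Finset OrderDual

namespace SimpleGraph

variable {V W : Type*} {G : SimpleGraph V} {H : SimpleGraph W} {u v : V}

lemma Iso.dist_le (φ : G ≃g H) (u v : V) : H.dist (φ u) (φ v) ≤ G.dist u v := by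
  by_cases h : G.Reachable u v
  · obtain ⟨p, hp⟩ := h.exists_walk_length_eq_dist
    calc H.dist (φ u) (φ v) ≤ (p.map φ.toHom).length := SimpleGraph.dist_le _
      _ = G.dist u v := by rw [Walk.length_map, hp]
  · rw [dist_eq_zero_of_not_reachable h, dist_eq_zero_of_not_reachable]
    rintro ⟨q⟩
    exact h ⟨(q.map φ.symm.toHom).copy (by simp) (by simp)⟩

lemma Iso.dist_eq (φ : G ≃g H) (u v : V) : H.dist (φ u) (φ v) = G.dist u v :=
  (φ.dist_le u v).antisymm (by simpa using φ.symm.dist_le (φ u) (φ v))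

lemma ediam_le_two_of_commonNeighbors_nonempty
    (h : ∀ u v, u ≠ v → ¬ G.Adj u v → (G.commonNeighbors u v).Nonempty) :
    G.ediam ≤ 2 := by
  refine ediam_le_of_edist_le fun u v => ?_
  by_cases huv : u = v
  · simp [huv]
  by_cases hadj : G.Adj u v
  · simp [edist_eq_one_iff_adj.2 hadj]
  · exact (edist_eq_two_iff.2 ⟨huv, hadj, h u v huv hadj⟩).le

lemma dist_le_two_of_ediam_le_two (hG : G.ediam ≤ 2) (u v : V) : G.dist u v ≤ 2 :=
  ENat.toNat_le_of_le_natCast (edist_le_ediam.trans hG)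

lemma dist_eq_two_of_ediam_le_two (hG : G.ediam ≤ 2) (huv : u ≠ v) (hadj : ¬ G.Adj u v) :
    G.dist u v = 2 := by
  have h0 : G.dist u v ≠ 0 :=
    ((preconnected_of_ediam_ne_top (hG.trans_lt (by decide)).ne) u v).pos_dist_of_ne huv |>.ne'
  have h1 : G.dist u v ≠ 1 := fun h => hadj (dist_eq_one_iff_adj.1 h)
  have := dist_le_two_of_ediam_le_two hG u v
  omega

end SimpleGraph

section StrongResolving

variable {V W : Type*} {G : SimpleGraph V} {H : SimpleGraph W} {u v w : V}

lemma stronglyResolves_iso_iff (φ : G ≃g H) :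
    StronglyResolves H (φ w) (φ u) (φ v) ↔ StronglyResolves G w u v := by
  simp only [StronglyResolves, φ.dist_eq]

lemma IsStrongResolvingSet.image (φ : G ≃g H) {S : Set V} (hS : IsStrongResolvingSet G S) :
    IsStrongResolvingSet H (φ '' S) := by
  intro u v huv
  obtain ⟨w, hwS, hw⟩ := hS (φ.symm u) (φ.symm v) (φ.symm.injective.ne huv)
  refine ⟨φ w, Set.mem_image_of_mem _ hwS, ?_⟩
  simpa using (stronglyResolves_iso_iff φ).2 hw

lemma sdim_le_of_iso (φ : G ≃g H) : sdim H ≤ sdim G :=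
  le_iInf fun S => iInf_le_of_le ⟨φ '' S.1, S.2.image φ⟩ (φ.injective.encard_image S.1).le

lemma sdim_congr (φ : G ≃g H) : sdim G = sdim H :=
  (sdim_le_of_iso φ.symm).antisymm (sdim_le_of_iso φ)

lemma sdim_eq_of_isLeast [Finite V] {m : ℕ}
    (h : IsLeast {k | ∃ S, IsStrongResolvingSet G S ∧ S.ncard = k} m) : sdim G = m := by
  obtain ⟨⟨S₀, hS₀, rfl⟩, hleast⟩ := h
  refine le_antisymm (iInf_le_of_le ⟨S₀, hS₀⟩ S₀.toFinite.cast_ncard_eq.ge)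
    (le_iInf fun S => ?_)
  rw [← S.1.toFinite.cast_ncard_eq]
  exact Nat.cast_le.2 (hleast ⟨S.1, S.2, rfl⟩)

lemma StronglyResolves.eq_or_eq_of_ediam_le_two (hG : G.ediam ≤ 2) (huv : u ≠ v)
    (hadj : ¬ G.Adj u v) (h : StronglyResolves G w u v) : w = u ∨ w = v := by
  have hconn : G.Preconnected := preconnected_of_ediam_ne_top (hG.trans_lt (by decide)).ne
  have huv₂ := dist_eq_two_of_ediam_le_two hG huv hadj
  have hvu₂ := dist_eq_two_of_ediam_le_two hG huv.symm fun h => hadj h.symm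
  have hwu := dist_le_two_of_ediam_le_two hG w u
  have hwv := dist_le_two_of_ediam_le_two hG w v
  rcases h with h | h
  · exact Or.inl ((hconn w u).dist_eq_zero_iff.1 (by omega))
  · exact Or.inr ((hconn w v).dist_eq_zero_iff.1 (by omega))

lemma stronglyResolves_of_adj_of_not_adj (hG : G.ediam ≤ 2) (huv : G.Adj u v)
    (hwv : G.Adj w v) (hwu : ¬ G.Adj w u) (hne : w ≠ u) : StronglyResolves G w u v :=
  Or.inr <| by rw [dist_eq_two_of_ediam_le_two hG hne hwu, dist_eq_one_iff_adj.2 hwv,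
    dist_eq_one_iff_adj.2 huv.symm]

lemma IsStrongResolvingSet.isClique_compl (hG : G.ediam ≤ 2) {S : Set V}
    (hS : IsStrongResolvingSet G S) : G.IsClique Sᶜ := by
  intro u hu v hv huv
  by_contra hadj
  obtain ⟨w, hwS, hw⟩ := hS u v huv
  rcases hw.eq_or_eq_of_ediam_le_two hG huv hadj with rfl | rfl
  exacts [hu hwS, hv hwS]

end StrongResolving

lemma eq_zero_of_forall_sum_add_mul_sub_one_eq_zero {ι : Type*} [Fintype ι] {g c : ι → ℚ}
    (hc : ∀ t, 1 ≤ c t) (hc₁ : ∀ s t, c s = 1 → c t = 1 → s = t)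
    (h : ∀ t, ∑ u, g u + g t * (c t - 1) = 0) (s : ι) : g s = 0 := by
  have hsum : ∑ u, g u = 0 := by
    have hsq : (∑ u, g u) ^ 2 + ∑ t, g t ^ 2 * (c t - 1) = 0 :=
      calc (∑ u, g u) ^ 2 + ∑ t, g t ^ 2 * (c t - 1)
          = ∑ t, g t * (∑ u, g u + g t * (c t - 1)) := by
            simp only [mul_add, sum_add_distrib, ← sum_mul, ← mul_assoc, sq]
        _ = 0 := by simp only [h, mul_zero, sum_const_zero]
    have hnonneg : 0 ≤ ∑ t, g t ^ 2 * (c t - 1) :=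
      sum_nonneg fun t _ => mul_nonneg (sq_nonneg _) (sub_nonneg.2 (hc t))
    exact pow_eq_zero_iff two_ne_zero |>.1
      ((add_eq_zero_iff_of_nonneg (sq_nonneg _) hnonneg).1 hsq).1
  have hsingle : ∀ t, g t ≠ 0 → c t = 1 := fun t ht => by
    have := h t
    rw [hsum, zero_add, mul_eq_zero, sub_eq_zero] at this
    exact this.resolve_left ht
  by_contra hs
  have hothers : ∀ u ≠ s, g u = 0 := fun u hus => by
    by_contra hu
    exact hus (hc₁ u s (hsingle u hu) (hsingle s hs))
  rw [sum_eq_single s (fun u _ hus => hothers u hus) (by simp)] at hsum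
  exact hs hsum

theorem card_le_of_pairwise_card_inter_eq_one {α : Type*} [Fintype α] [DecidableEq α]
    {A : Finset (Finset α)} (hne : ∀ s ∈ A, s.Nonempty)
    (hA : (A : Set (Finset α)).Pairwise fun s t => #(s ∩ t) = 1) :
    #A ≤ Fintype.card α := by
  let v : A → α → ℚ := fun s x => if x ∈ s.1 then 1 else 0
  have hv : ∀ s t : A, ∑ x, v s x * v t x = #(s.1 ∩ t.1) := fun s t => by
    rw [inter_comm]
    simp [v, ← ite_and, ← mem_inter]
  have hinter : ∀ s t : A, s ≠ t → #(s.1 ∩ t.1) = 1 := fun s t hst =>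
    hA s.2 t.2 (Subtype.coe_injective.ne hst)
  suffices LinearIndependent ℚ v by simpa using this.fintype_card_le_finrank
  rw [Fintype.linearIndependent_iff]
  intro g hg
  have hg' : ∀ x, ∑ u, g u * v u x = 0 := fun x => by simpa using congrFun hg x
  refine eq_zero_of_forall_sum_add_mul_sub_one_eq_zero (c := fun t => #t.1)
    (fun t => by exact_mod_cast (hne t t.2).card_pos) (fun s t hs ht => ?_) fun t => ?_
  · by_contra hst
    obtain ⟨a, ha⟩ := card_eq_one.1 (Nat.cast_eq_one.1 hs)
    obtain ⟨b, hb⟩ := card_eq_one.1 (Nat.cast_eq_one.1 ht)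
    have hab : a = b := by
      by_contra hab
      simpa [ha, hb, hab] using hinter s t hst
    exact hst (Subtype.ext (ha.trans (hab ▸ hb).symm))
  calc ∑ u, g u + g t * (#t.1 - 1)
      = ∑ u, (g u + if u = t then g t * (#t.1 - 1) else 0) := by
        rw [sum_add_distrib, sum_ite_eq' univ t, if_pos (mem_univ t)]
    _ = ∑ u, g u * #(t.1 ∩ u.1) := sum_congr rfl fun u _ => by
        rcases eq_or_ne u t with rfl | hut
        · rw [if_pos rfl, inter_self]
          ring
        · rw [if_neg hut, hinter t u hut.symm]
          simp
    _ = ∑ x, v t x * ∑ u, g u * v u x := by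
        simp_rw [← hv, mul_sum]
        rw [sum_comm]
        exact sum_congr rfl fun _ _ => sum_congr rfl fun _ _ => by ring
    _ = 0 := by simp only [hg', mul_zero, sum_const_zero]

section Model

lemma Finset.ne_empty_and_ne_univ_of_card {ι : Type*} [Fintype ι] {s : Finset ι} (h₀ : 0 < #s)
    (h₁ : #s < Fintype.card ι) : s ≠ ∅ ∧ s ≠ univ :=
  ⟨fun h => by simp [h] at h₀, fun h => by simp [h] at h₁⟩

variable {ι : Type*} [Fintype ι] [DecidableEq ι]

abbrev ProperSubset (ι : Type*) [Fintype ι] := {s : Finset ι // s ≠ ∅ ∧ s ≠ univ}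

lemma card_properSubset [Nonempty ι] :
    Fintype.card (ProperSubset ι) = 2 ^ Fintype.card ι - 2 := by
  rw [Fintype.card_subtype, ← Fintype.card_finset, ← card_univ,
    ← card_pair (univ_nonempty (α := ι)).ne_empty.symm,
    ← card_sdiff_of_subset (subset_univ _)]
  congr 1
  ext s
  simp

def meetOneGraph (ι : Type*) [Fintype ι] [DecidableEq ι] : SimpleGraph (ProperSubset ι) where
  Adj s t := s ≠ t ∧ #(s.1 ∩ t.1) = 1
  symm := by
    constructor
    rintro s t ⟨hne, h⟩
    exact ⟨hne.symm, by rwa [inter_comm]⟩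
  loopless := by constructor; rintro s ⟨hne, -⟩; exact hne rfl

lemma meetOneGraph_ediam_le_two (hι : 3 ≤ Fintype.card ι) : (meetOneGraph ι).ediam ≤ 2 := by
  refine ediam_le_two_of_commonNeighbors_nonempty fun s t hst hadj => ?_
  obtain ⟨w, hsw, hwt⟩ : ∃ w, (meetOneGraph ι).Adj s w ∧ (meetOneGraph ι).Adj w t := by
    rcases (s.1 ∩ t.1).eq_empty_or_nonempty with hdisj | ⟨b, hb⟩
    · obtain ⟨a, ha⟩ := nonempty_iff_ne_empty.2 s.2.1
      obtain ⟨b, hb⟩ := nonempty_iff_ne_empty.2 t.2.1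
      have hbs : b ∉ s.1 := fun h => by simpa [hdisj] using mem_inter.2 ⟨h, hb⟩
      have hat : a ∉ t.1 := fun h => by simpa [hdisj] using mem_inter.2 ⟨ha, h⟩
      refine ⟨⟨{a, b}, ne_empty_and_ne_univ_of_card (by simp) (card_le_two.trans_lt hι)⟩,
        ⟨?_, ?_⟩, ⟨?_, ?_⟩⟩
      · rintro rfl
        simp at hbs
      · simp [inter_insert_of_mem ha, inter_singleton_of_notMem hbs]
      · rintro rfl
        simp at hat
      · simp [insert_inter_of_notMem hat, singleton_inter_of_mem hb]
    · have hlt : 1 < #(s.1 ∩ t.1) := by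
        have := card_pos.2 ⟨b, hb⟩
        have : #(s.1 ∩ t.1) ≠ 1 := fun h => hadj ⟨hst, h⟩
        omega
      obtain ⟨c, hc, hcb⟩ := exists_mem_ne hlt b
      rw [mem_inter] at hb hc
      refine ⟨⟨{b}, ne_empty_and_ne_univ_of_card (by simp)
        (by rw [card_singleton]; exact lt_of_lt_of_le (by norm_num) hι)⟩,
        ⟨?_, ?_⟩, ⟨?_, ?_⟩⟩
      · rintro rfl
        simp [hcb] at hc
      · simp [inter_singleton_of_mem hb.1]
      · rintro rfl
        simp [hcb] at hc
      · simp [singleton_inter_of_mem hb.2]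
  exact ⟨w, (mem_commonNeighbors _).2 ⟨hsw, hwt.symm⟩⟩

def starVertex (hι : 3 ≤ Fintype.card ι) (a k : ι) : ProperSubset ι :=
  ⟨{a, k}, ne_empty_and_ne_univ_of_card (by simp) (card_le_two.trans_lt hι)⟩

lemma starVertex_injective (hι : 3 ≤ Fintype.card ι) (a : ι) :
    Function.Injective (starVertex hι a) := by
  intro k l h
  have hfin : ({a, k} : Finset ι) = {a, l} := congrArg Subtype.val h
  have hpair : ({a, k} : Set ι) = {a, l} := by
    simpa using congrArg (fun s : Finset ι => (s : Set ι)) hfin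
  rcases Set.pair_eq_pair_iff.1 hpair with ⟨-, hkl⟩ | ⟨hal, hka⟩
  exacts [hkl, hka.trans hal]

lemma isStrongResolvingSet_compl_range_starVertex (hι : 3 ≤ Fintype.card ι) (a : ι) :
    IsStrongResolvingSet (meetOneGraph ι) (Set.range (starVertex hι a))ᶜ := by
  have hG := meetOneGraph_ediam_le_two hι
  have key : ∀ k l, k ≠ l → l ≠ a → ∃ w ∈ (Set.range (starVertex hι a))ᶜ,
      StronglyResolves (meetOneGraph ι) w (starVertex hι a k) (starVertex hι a l) := by
    intro k l hkl hla
    let w : ProperSubset ι := ⟨{l}, ne_empty_and_ne_univ_of_card (by simp)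
      (by rw [card_singleton]; exact lt_of_lt_of_le (by norm_num) hι)⟩
    have hw : ∀ m, w ≠ starVertex hι a m := fun m h => by
      have : a ∈ w.1 := by rw [h]; exact mem_insert_self a {m}
      exact hla (mem_singleton.1 this).symm
    refine ⟨w, fun ⟨m, hm⟩ => hw m hm.symm, stronglyResolves_of_adj_of_not_adj hG
      ⟨(starVertex_injective hι a).ne hkl, ?_⟩ ⟨hw l, ?_⟩ ?_ (hw k)⟩
    · change #(insert a {k} ∩ insert a {l}) = 1
      rw [← insert_inter_distrib, singleton_inter_of_notMem (by simpa using hkl)]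
      rfl
    · exact card_eq_one.2
        ⟨l, singleton_inter_of_mem (mem_insert_of_mem (mem_singleton_self l))⟩
    · rintro ⟨-, h⟩
      have hlak : l ∉ ({a, k} : Finset ι) := by simp [hla, hkl.symm]
      simp [w, starVertex, singleton_inter_of_notMem hlak] at h
  intro u v huv
  by_cases hu : u ∈ Set.range (starVertex hι a)
  · by_cases hv : v ∈ Set.range (starVertex hι a)
    · obtain ⟨k, rfl⟩ := hu
      obtain ⟨l, rfl⟩ := hv
      have hkl : k ≠ l := fun h => huv (h ▸ rfl)
      by_cases hla : l = a
      · obtain ⟨w, hw, hres⟩ := key l k hkl.symm (hla ▸ hkl)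
        exact ⟨w, hw, hres.symm⟩
      · exact key k l hkl hla
    · exact ⟨v, hv, Or.inr (by rw [SimpleGraph.dist_self, zero_add])⟩
  · exact ⟨u, hu, Or.inl (by rw [SimpleGraph.dist_self, zero_add])⟩

lemma ncard_le_of_isClique_meetOneGraph {S : Set (ProperSubset ι)}
    (hS : (meetOneGraph ι).IsClique S) : S.ncard ≤ Fintype.card ι := by
  let A := S.toFinite.toFinset.map (Function.Embedding.subtype _)
  calc S.ncard = #A := by rw [Set.ncard_eq_toFinset_card S, card_map]
    _ ≤ Fintype.card ι := by
      refine card_le_of_pairwise_card_inter_eq_one ?_ ?_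
      · simp only [A, mem_map, Set.Finite.mem_toFinset, Function.Embedding.coe_subtype]
        rintro _ ⟨v, -, rfl⟩
        exact nonempty_iff_ne_empty.2 v.2.1
      · simp only [A, coe_map, Set.Finite.coe_toFinset, Function.Embedding.coe_subtype]
        rintro _ ⟨u, hu, rfl⟩ _ ⟨v, hv, rfl⟩ huv
        exact (hS hu hv (Subtype.coe_injective.ne_iff.1 huv)).2

theorem sdim_meetOneGraph (hι : 3 ≤ Fintype.card ι) :
    sdim (meetOneGraph ι) = (2 ^ Fintype.card ι - Fintype.card ι - 2 : ℕ) := by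
  have : Nonempty ι := Fintype.card_pos_iff.1 (by omega)
  have hV : Nat.card (ProperSubset ι) = 2 ^ Fintype.card ι - 2 := by
    rw [Nat.card_eq_fintype_card, card_properSubset]
  refine sdim_eq_of_isLeast ⟨⟨_, isStrongResolvingSet_compl_range_starVertex hι
    (Classical.arbitrary ι), ?_⟩, ?_⟩
  · rw [Set.ncard_compl, hV, Set.ncard_range_of_injective (starVertex_injective hι _),
      Nat.card_eq_fintype_card]
    omega
  · rintro _ ⟨S, hS, rfl⟩
    have hclique := ncard_le_of_isClique_meetOneGraph
      (hS.isClique_compl (meetOneGraph_ediam_le_two hι))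
    have hsum := Set.ncard_add_ncard_compl S
    rw [hV] at hsum
    omega

end Model

section ZeroSet

variable {ι : Type*} [DecidableEq ι] (F : ι → Type*) [∀ i, Field (F i)]

def zeroSetIdeal (s : Finset ι) : Ideal (Π i, F i) :=
  Ideal.pi fun i => if i ∈ s then ⊥ else ⊤

variable {F}

lemma zeroSetIdeal_le_iff {s t : Finset ι} :
    zeroSetIdeal F s ≤ zeroSetIdeal F t ↔ t ⊆ s := by
  simp only [zeroSetIdeal, Ideal.pi_le_pi_iff, Pi.le_def, Finset.subset_iff]
  refine forall_congr' fun i => ?_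
  split_ifs <;> simp_all

lemma zeroSetIdeal_surjective [Fintype ι] : Function.Surjective (zeroSetIdeal (ι := ι) F) := by
  intro I
  classical
  refine ⟨univ.filter fun i => I.map (Pi.evalRingHom F i) = ⊥, ?_⟩
  conv_rhs => rw [← Ideal.piOrderIso.symm_apply_apply I]
  refine congrArg Ideal.pi (funext fun i => ?_)
  change _ = I.map (Pi.evalRingHom F i)
  rcases Ideal.eq_bot_or_top (I.map (Pi.evalRingHom F i)) with h | h
  · rw [if_pos (mem_filter.2 ⟨mem_univ i, h⟩), h]
  · rw [h, if_neg]
    exact fun hi => top_ne_bot (h.symm.trans (mem_filter.1 hi).2)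

variable [Fintype ι]

variable (F) in
noncomputable def zeroSetOrderIso : Finset ι ≃o (Ideal (Π i, F i))ᵒᵈ :=
  OrderIso.ofSurjective (OrderEmbedding.ofMapLEIff (toDual ∘ zeroSetIdeal F)
    fun _ _ => zeroSetIdeal_le_iff) (toDual.surjective.comp zeroSetIdeal_surjective)

lemma zeroSetIdeal_injective : Function.Injective (zeroSetIdeal (ι := ι) F) :=
  fun _ _ h => (zeroSetOrderIso F).injective h

lemma zeroSetIdeal_bijective : Function.Bijective (zeroSetIdeal (ι := ι) F) :=
  ⟨zeroSetIdeal_injective, zeroSetIdeal_surjective⟩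

lemma zeroSetOrderIso_apply (s : Finset ι) :
    zeroSetOrderIso F s = toDual (zeroSetIdeal F s) := rfl

lemma zeroSetIdeal_empty : zeroSetIdeal F (∅ : Finset ι) = ⊤ :=
  congrArg ofDual (zeroSetOrderIso F).map_bot

lemma zeroSetIdeal_univ : zeroSetIdeal F (univ : Finset ι) = ⊥ :=
  congrArg ofDual (zeroSetOrderIso F).map_top

lemma zeroSetIdeal_sup (s t : Finset ι) :
    zeroSetIdeal F s ⊔ zeroSetIdeal F t = zeroSetIdeal F (s ∩ t) :=
  congrArg ofDual ((zeroSetOrderIso F).map_inf s t).symm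

lemma isPrime_zeroSetIdeal_iff {s : Finset ι} : (zeroSetIdeal F s).IsPrime ↔ #s = 1 := by
  rw [← Ideal.isMaximal_iff_isPrime, Ideal.isMaximal_def, ← isAtom_dual_iff_isCoatom,
    ← zeroSetOrderIso_apply, OrderIso.isAtom_iff, Finset.isAtom_iff, Finset.card_eq_one]

variable (F) in
noncomputable def meetOneGraphIsoPIS : meetOneGraph ι ≃g PIS (Π i, F i) where
  toEquiv := (Equiv.ofBijective _ zeroSetIdeal_bijective).subtypeEquiv fun s => by
    rw [Equiv.ofBijective_apply, and_comm, ← zeroSetIdeal_empty, ← zeroSetIdeal_univ,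
      zeroSetIdeal_injective.ne_iff, zeroSetIdeal_injective.ne_iff]
  map_rel_iff' {s t} := and_congr (Equiv.injective _).ne_iff <| by
    change (zeroSetIdeal F s.1 + zeroSetIdeal F t.1).IsPrime ↔ _
    rw [Submodule.add_eq_sup, zeroSetIdeal_sup, isPrime_zeroSetIdeal_iff]

end ZeroSet

/-- For a product of `n ≥ 3` fields, `sdim (PIS R) = 2^n - n - 2`. -/
theorem pis_sdim_of_fields {n : ℕ} (hn : 3 ≤ n)
    (F : Fin n → Type*) [∀ i, Field (F i)] :
    sdim (PIS (∀ i, F i)) = (2 ^ n - n - 2 : ℕ) := by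
  rw [← sdim_congr (meetOneGraphIsoPIS F), sdim_meetOneGraph (by simpa using hn),
    Fintype.card_fin]
end

section
/- Let R ≅ R₁ × ⋯ × Rₙ (n ≥ 2), where each Rᵢ is a local ring whose only nonzero proper ideal is its maximal ideal Mᵢ. Then any two distinct vertices I, J of PIS(R) satisfy N(I) ≠ N(J). -/
open SimpleGraph

/-!
An ideal of `∏ Rᵢ` is determined by its images `Iᵢ` in the factors, so distinct vertices
`I`, `J` differ in some factor `i`. For a proper ideal `c` of `Rᵢ`, the vertex `K = πᵢ⁻¹(c)`
satisfies `I + K = πᵢ⁻¹(Iᵢ + c)`, which is prime iff `Iᵢ + c = Mᵢ`: `Mᵢ` is the only prime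
of `Rᵢ`, because a domain with a unique nonzero proper ideal `M ∋ m ≠ 0` would have
`(m) = M = (m²)`. Choosing `c ∈ {0, Mᵢ}` according to `Iᵢ, Jᵢ ∈ {0, Mᵢ, Rᵢ}` makes `K` adjacent
to exactly one of `I`, `J`; `n ≥ 2` keeps `K` nonzero.
-/

namespace Ideal

variable {R S : Type*} [CommRing R] [CommRing S] {f : R →+* S}

theorem comap_isPrime_iff_of_surjective (hf : Function.Surjective f) {P : Ideal S} :
    (P.comap f).IsPrime ↔ P.IsPrime := by
  refine ⟨fun hP ↦ ?_, fun hP ↦ comap_isPrime f P⟩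
  rw [← map_comap_of_surjective f hf P]
  exact map_isPrime_of_surjective hf (ker_le_comap f)

theorem sup_comap_eq_comap_map_sup_of_surjective (hf : Function.Surjective f) (I : Ideal R)
    (c : Ideal S) : I ⊔ c.comap f = (I.map f ⊔ c).comap f := by
  calc I ⊔ c.comap f = I ⊔ c.comap f ⊔ (⊥ : Ideal S).comap f :=
        (sup_eq_left.mpr ((comap_mono bot_le).trans le_sup_right)).symm
    _ = ((I ⊔ c.comap f).map f).comap f := (comap_map_of_surjective f hf _).symm
    _ = (I.map f ⊔ c).comap f := by rw [map_sup, map_comap_of_surjective f hf]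

def IsUniqueNontrivial (M : Ideal S) : Prop :=
  M ≠ ⊥ ∧ M ≠ ⊤ ∧ ∀ I : Ideal S, I ≠ ⊥ → I ≠ ⊤ → I = M

namespace IsUniqueNontrivial

variable {M : Ideal S}

theorem eq_bot_or_eq_or_eq_top (hM : M.IsUniqueNontrivial) (I : Ideal S) :
    I = ⊥ ∨ I = M ∨ I = ⊤ := by
  by_cases h0 : I = ⊥
  · exact .inl h0
  by_cases h1 : I = ⊤
  · exact .inr (.inr h1)
  exact .inr (.inl (hM.2.2 I h0 h1))

theorem nontrivial (hM : M.IsUniqueNontrivial) : Nontrivial S :=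
  (Submodule.nontrivial_iff S).mp ⟨⟨M, ⊥, hM.1⟩⟩

theorem isMaximal (hM : M.IsUniqueNontrivial) : M.IsMaximal := by
  refine isMaximal_def.mpr ⟨hM.2.1, fun J hMJ ↦ ?_⟩
  by_contra hJ
  exact hMJ.ne (hM.2.2 J (ne_bot_of_gt hMJ) hJ).symm

theorem not_isPrime_bot (hM : M.IsUniqueNontrivial) : ¬ (⊥ : Ideal S).IsPrime := by
  intro hbot
  have := IsDomain.of_bot_isPrime S
  obtain ⟨m, hmM, hm0⟩ := Submodule.exists_mem_ne_zero_of_ne_bot hM.1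
  have hspan : ∀ x ∈ M, x ≠ 0 → span {x} = M := fun x hx hx0 ↦
    hM.2.2 _ (by simpa using hx0)
      (fun h ↦ hM.2.1 (eq_top_iff.mpr (h ▸ span_le.mpr (by simpa using hx))))
  have hassoc : Associated (m * 1) (m * m) := by
    rw [mul_one, ← span_singleton_eq_span_singleton, hspan m hmM hm0,
      hspan _ (M.mul_mem_left m hmM) (mul_ne_zero hm0 hm0)]
  exact hM.2.1 (eq_top_of_isUnit_mem M hmM (associated_one_iff_isUnit.mp
    (hassoc.of_mul_left (Associated.refl m) hm0).symm))

theorem isPrime_iff (hM : M.IsUniqueNontrivial) {P : Ideal S} : P.IsPrime ↔ P = M := by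
  refine ⟨fun hP ↦ ?_, fun h ↦ h ▸ hM.isMaximal.isPrime⟩
  exact hM.2.2 P (fun h ↦ hM.not_isPrime_bot (h ▸ hP)) hP.ne_top

theorem exists_separating (hM : M.IsUniqueNontrivial) {a b : Ideal S} (hab : a ≠ b) :
    ∃ c ≠ ⊤, (c ≠ a ∧ (a ⊔ c).IsPrime ∧ ¬ (b ⊔ c).IsPrime) ∨
      (c ≠ b ∧ (b ⊔ c).IsPrime ∧ ¬ (a ⊔ c).IsPrime) := by
  simp only [hM.isPrime_iff]
  have := hM.nontrivial
  have hM0 := hM.1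
  have hMt := hM.2.1
  -- `c = M` if `{a, b} = {⊥, ⊤}`, and `c = ⊥` otherwise
  rcases hM.eq_bot_or_eq_or_eq_top a with rfl | ha | rfl <;>
    rcases hM.eq_bot_or_eq_or_eq_top b with rfl | hb | rfl <;>
    subst_vars <;>
    first
    | exact absurd rfl hab
    | (refine ⟨⊥, bot_ne_top, ?_⟩; simp [hM0.symm, hMt.symm]; done)
    | (refine ⟨_, hMt, ?_⟩; simp [hM0, hMt.symm])

end IsUniqueNontrivial

end Ideal

theorem Pi.ker_evalRingHom_ne_bot {ι : Type*} {R : ι → Type*} [∀ i, CommRing (R i)] {i j : ι}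
    (hji : j ≠ i) [Nontrivial (R j)] : RingHom.ker (Pi.evalRingHom R i) ≠ ⊥ := by
  classical
  refine (Submodule.ne_bot_iff _).mpr ⟨Pi.single j 1, ?_, ?_⟩
  · simp [Pi.single_eq_of_ne' hji]
  · simp

theorem PIS.neighborSet_ne_of_surjective {R S : Type*} [CommRing R] [CommRing S] {f : R →+* S}
    (hf : Function.Surjective f) (hker : RingHom.ker f ≠ ⊥)
    {I J : {I : Ideal R // I ≠ ⊥ ∧ I ≠ ⊤}} {c : Ideal S} (hc : c ≠ ⊤) (hcI : c ≠ I.1.map f)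
    (hI : (I.1.map f ⊔ c).IsPrime) (hJ : ¬ (J.1.map f ⊔ c).IsPrime) :
    (PIS R).neighborSet I ≠ (PIS R).neighborSet J := by
  let K : {I : Ideal R // I ≠ ⊥ ∧ I ≠ ⊤} :=
    ⟨c.comap f, fun h ↦ hker (eq_bot_iff.mpr (h ▸ Ideal.ker_le_comap f)), Ideal.comap_ne_top f hc⟩
  have isPrime_add_K (L : Ideal R) : (L + K.1).IsPrime ↔ (L.map f ⊔ c).IsPrime := by
    rw [Submodule.add_eq_sup, Ideal.sup_comap_eq_comap_map_sup_of_surjective hf,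
      Ideal.comap_isPrime_iff_of_surjective hf]
  have hIK : I ≠ K := fun h ↦ hcI (by rw [h]; exact (Ideal.map_comap_of_surjective f hf c).symm)
  intro hN
  have hK : K ∈ (PIS R).neighborSet I := ⟨hIK, (isPrime_add_K I.1).mpr hI⟩
  rw [hN] at hK
  exact hJ ((isPrime_add_K J.1).mp hK.2)

/-- If each `Rᵢ` is a local ring whose unique nonzero proper ideal is `Mᵢ`
(`n ≥ 2`), then distinct vertices of `PIS(R)` have distinct open
neighborhoods. -/
theorem pis_neighborSet_injective_of_uniqueIdeal {n : ℕ} (hn : 2 ≤ n)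
    (R : Fin n → Type*) [∀ i, CommRing (R i)] (M : ∀ i, Ideal (R i))
    (hM : ∀ i, M i ≠ ⊥ ∧ M i ≠ ⊤ ∧
      ∀ I : Ideal (R i), I ≠ ⊥ → I ≠ ⊤ → I = M i) :
    ∀ I J : {I : Ideal (∀ i, R i) // I ≠ ⊥ ∧ I ≠ ⊤}, I ≠ J →
      (PIS (∀ i, R i)).neighborSet I ≠ (PIS (∀ i, R i)).neighborSet J := by
  intro I J hIJ
  obtain ⟨i, hi⟩ : ∃ i, I.1.map (Pi.evalRingHom R i) ≠ J.1.map (Pi.evalRingHom R i) :=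
    Function.ne_iff.mp (Ideal.piOrderIso.injective.ne (Subtype.coe_injective.ne hIJ))
  have hM' : ∀ i, (M i).IsUniqueNontrivial := hM
  have := Fin.nontrivial_iff_two_le.mpr hn
  obtain ⟨j, hji⟩ := exists_ne i
  have := (hM' j).nontrivial
  have hker := Pi.ker_evalRingHom_ne_bot (R := R) hji
  obtain ⟨c, hc, ⟨hcI, hI, hJ⟩ | ⟨hcJ, hJ, hI⟩⟩ := (hM' i).exists_separating hi
  · exact PIS.neighborSet_ne_of_surjective (Function.surjective_eval i) hker hc hcI hI hJ
  · exact (PIS.neighborSet_ne_of_surjective (Function.surjective_eval i) hker hc hcJ hJ hI).symm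
end

section
/- Let R ≅ R₁ × ⋯ × Rₙ (n ≥ 2), where each Rᵢ is a local ring with unique nonzero proper ideal Mᵢ. Then the clique number of PIS(R) equals n + 1. -/
open SimpleGraph

/-!
Every ideal of `Π i, R i` is a tuple of ideals `⊥`, `Mᵢ` or `⊤` of the factors, and every prime is
the preimage of a prime of one factor. Let `L(I)` be the set of indices at which `I` is proper. As
the factors are local, `I + J` prime forces `L(I) ∩ L(J)` to be a single index, so in a clique the
sets `L(I)` meet pairwise in one point. The linear-algebra proof of Fisher's inequality bounds by
`n` the vertices with `#L(I) ≥ 2` together with one vertex with `#L(I) = 1`, and only two vertices,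
with component `⊥` or `Mᵢ` at `i`, have `L(I) = {i}`: a clique has at most `n + 1` vertices.
Conversely, `(0, R₂, …, Rₙ)`, the prime `P = (M₁, R₂, …, Rₙ)` and, for `k ≥ 2`, the ideal with
`M₁`, `Mₖ` in coordinates `1`, `k` and `Rⱼ` elsewhere pairwise add up to `P`.
-/

open Finset

theorem SimpleGraph.cliqueNum_eq_of_forall_card_le {α : Type*} {G : SimpleGraph α} {m : ℕ}
    (hle : ∀ s : Finset α, G.IsClique (s : Set α) → #s ≤ m) (hm : ∃ s, G.IsNClique m s) :
    G.cliqueNum = m := by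
  have hbdd : m ∈ upperBounds {k | ∃ s, G.IsNClique k s} := by
    rintro _ ⟨s, hs⟩
    exact hs.card_eq ▸ hle s hs.isClique
  exact le_antisymm (csSup_le ⟨m, hm⟩ hbdd) (le_csSup ⟨m, hbdd⟩ hm)

section Fisher

variable {ι α : Type*} [Fintype ι] [Fintype α] [DecidableEq α] {L : ι → Finset α}

theorem sum_sq_eq_of_card_inter_eq_one (hinter : ∀ u v, u ≠ v → #(L u ∩ L v) = 1)
    (g : ι → ℝ) :
    ∑ a, (∑ u, g u * if a ∈ L u then 1 else 0) ^ 2 =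
      (∑ u, g u) ^ 2 + ∑ u, g u ^ 2 * ((#(L u) : ℝ) - 1) := by
  classical
  have hdot (u v : ι) :
      ∑ a, (if a ∈ L u then (1 : ℝ) else 0) * (if a ∈ L v then 1 else 0) =
        1 + if u = v then (#(L u) : ℝ) - 1 else 0 := by
    have : ∑ a, (if a ∈ L u then (1 : ℝ) else 0) * (if a ∈ L v then 1 else 0) =
        #(L u ∩ L v) := by
      simp [← ite_and, ← mem_inter, inter_comm]
    rw [this]
    split_ifs with h
    · subst h; simp
    · simp [hinter u v h]
  calc ∑ a, (∑ u, g u * if a ∈ L u then 1 else 0) ^ 2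
      = ∑ u, ∑ v, g u * g v *
          ∑ a, (if a ∈ L u then (1 : ℝ) else 0) * (if a ∈ L v then 1 else 0) := by
        simp_rw [sq, sum_mul_sum, mul_sum]
        rw [sum_comm]
        refine sum_congr rfl fun u _ => ?_
        rw [sum_comm]
        exact sum_congr rfl fun v _ => sum_congr rfl fun a _ => by ring
    _ = _ := by
        simp_rw [hdot, mul_add, mul_one, sum_add_distrib, mul_ite, mul_zero, sum_ite_eq,
          mem_univ, if_true, sq, sum_mul_sum]

theorem linearIndependent_of_card_inter_eq_one (hne : ∀ u, (L u).Nonempty)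
    (hsmall : ∀ u v, u ≠ v → 2 ≤ #(L u) ∨ 2 ≤ #(L v))
    (hinter : ∀ u v, u ≠ v → #(L u ∩ L v) = 1) :
    LinearIndependent ℝ fun u a => if a ∈ L u then (1 : ℝ) else 0 := by
  rw [Fintype.linearIndependent_iff]
  intro g hg
  have hnonneg (u : ι) : 0 ≤ g u ^ 2 * ((#(L u) : ℝ) - 1) := by
    have : (1 : ℝ) ≤ #(L u) := by exact_mod_cast (hne u).card_pos
    nlinarith [sq_nonneg (g u)]
  have hzero : (∑ u, g u) ^ 2 + ∑ u, g u ^ 2 * ((#(L u) : ℝ) - 1) = 0 := by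
    rw [← sum_sq_eq_of_card_inter_eq_one hinter]
    exact sum_eq_zero fun a _ => by simpa using congrFun hg a
  obtain ⟨hsum, hterms⟩ :=
    (add_eq_zero_iff_of_nonneg (sq_nonneg _) (sum_nonneg fun u _ => hnonneg u)).1 hzero
  have hterm (u : ι) (hu : 2 ≤ #(L u)) : g u = 0 := by
    have := (sum_eq_zero_iff_of_nonneg fun u _ => hnonneg u).1 hterms u (mem_univ u)
    have h1 : (1 : ℝ) < #(L u) := by exact_mod_cast hu
    simpa [sub_ne_zero.2 h1.ne'] using this
  intro u
  by_cases hu : 2 ≤ #(L u)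
  · exact hterm u hu
  · have hothers (v : ι) (hv : v ≠ u) : g v = 0 := hterm v ((hsmall v u hv).resolve_right hu)
    simpa [Fintype.sum_eq_single u hothers] using hsum

-- The non-uniform Fisher inequality with `λ = 1`.
theorem card_le_card_of_card_inter_eq_one (hne : ∀ u, (L u).Nonempty)
    (hsmall : ∀ u v, u ≠ v → 2 ≤ #(L u) ∨ 2 ≤ #(L v))
    (hinter : ∀ u v, u ≠ v → #(L u ∩ L v) = 1) :
    Fintype.card ι ≤ Fintype.card α := by
  simpa using (linearIndependent_of_card_inter_eq_one hne hsmall hinter).fintype_card_le_finrank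

end Fisher

namespace IsLocalRing

theorem sup_ne_top {A : Type*} [CommRing A] [IsLocalRing A] {I J : Ideal A} (hI : I ≠ ⊤)
    (hJ : J ≠ ⊤) : I ⊔ J ≠ ⊤ :=
  ne_top_of_le_ne_top (maximalIdeal.isMaximal A).ne_top
    (sup_le (le_maximalIdeal hI) (le_maximalIdeal hJ))

end IsLocalRing

namespace Ideal

section UniqueNonzeroProper

variable {A : Type*} [CommRing A] {M : Ideal A}

theorem le_of_forall_eq (hM : ∀ I : Ideal A, I ≠ ⊥ → I ≠ ⊤ → I = M) {I : Ideal A}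
    (hI : I ≠ ⊤) : I ≤ M := by
  by_cases hIb : I = ⊥
  · exact hIb ▸ bot_le
  · exact (hM I hIb hI).le

theorem isMaximal_of_forall_eq (htop : M ≠ ⊤)
    (hM : ∀ I : Ideal A, I ≠ ⊥ → I ≠ ⊤ → I = M) : M.IsMaximal :=
  ⟨htop, fun _ hMJ => by_contra fun hJ => hMJ.not_ge (le_of_forall_eq hM hJ)⟩

theorem isLocalRing_of_forall_eq (htop : M ≠ ⊤)
    (hM : ∀ I : Ideal A, I ≠ ⊥ → I ≠ ⊤ → I = M) : IsLocalRing A :=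
  .of_unique_max_ideal ⟨M, isMaximal_of_forall_eq htop hM,
    fun _ hI => hI.eq_of_le htop (le_of_forall_eq hM hI.ne_top)⟩

end UniqueNonzeroProper

variable {ι : Type*} {R : ι → Type*} [∀ i, CommRing (R i)]

theorem map_evalRingHom_comap_evalRingHom_of_ne [DecidableEq ι] {i j : ι} (h : j ≠ i)
    (q : Ideal (R i)) : (q.comap (Pi.evalRingHom R i)).map (Pi.evalRingHom R j) = ⊤ := by
  rw [eq_top_iff_one]
  simpa using mem_map_of_mem (Pi.evalRingHom R j)
    (show Pi.single j 1 ∈ q.comap (Pi.evalRingHom R i) by simp [Pi.single_eq_of_ne' h])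

theorem pi_ite_eq_comap [DecidableEq ι] (M : ∀ i, Ideal (R i)) (i : ι) :
    pi (fun j => if j = i then M j else ⊤) = (M i).comap (Pi.evalRingHom R i) := by
  ext x
  refine ⟨fun hx => by simpa using hx i, fun hx j => ?_⟩
  dsimp only
  split_ifs with hj
  · exact hj ▸ hx
  · exact Submodule.mem_top

theorem pi_injective : Function.Injective (pi : (∀ i, Ideal (R i)) → Ideal (∀ i, R i)) :=
  fun _ _ h => le_antisymm (pi_le_pi_iff.1 h.le) (pi_le_pi_iff.1 h.ge)

theorem pi_ne_bot {T : ∀ i, Ideal (R i)} {i : ι} (h : T i ≠ ⊥) : pi T ≠ ⊥ := fun hT =>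
  h (by rw [← map_evalRingHom_pi (I := T) i, hT, map_bot])

theorem pi_ne_top {T : ∀ i, Ideal (R i)} {i : ι} (h : T i ≠ ⊤) : pi T ≠ ⊤ := fun hT =>
  h (by rw [← map_evalRingHom_pi (I := T) i, hT, map_top])

theorem pi_sup [Finite ι] (S T : ∀ i, Ideal (R i)) : pi S ⊔ pi T = pi (S ⊔ T) :=
  ((piOrderIso (R := R)).symm.map_sup S T).symm

variable [Fintype ι]

open scoped Classical in
noncomputable def properIndices (I : Ideal (∀ i, R i)) : Finset ι :=
  {i | I.map (Pi.evalRingHom R i) ≠ ⊤}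

theorem mem_properIndices {I : Ideal (∀ i, R i)} {i : ι} :
    i ∈ properIndices I ↔ I.map (Pi.evalRingHom R i) ≠ ⊤ := by
  simp [properIndices]

theorem properIndices_nonempty {I : Ideal (∀ i, R i)} (hI : I ≠ ⊤) :
    (properIndices I).Nonempty := by
  by_contra h
  refine hI (piOrderIso.injective (funext fun i => ?_))
  change I.map _ = (⊤ : Ideal _).map _
  rw [map_top]
  by_contra hi
  exact h ⟨i, mem_properIndices.2 hi⟩

theorem exists_properIndices_inter_eq_singleton [DecidableEq ι] [∀ i, IsLocalRing (R i)]
    {I J : Ideal (∀ i, R i)} (h : (I ⊔ J).IsPrime) :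
    ∃ i, properIndices I ∩ properIndices J = {i} := by
  obtain ⟨i, q, hq⟩ := PrimeSpectrum.exists_comap_evalRingHom_eq ⟨I ⊔ J, h⟩
  have hP : I ⊔ J = q.asIdeal.comap (Pi.evalRingHom R i) := congrArg PrimeSpectrum.asIdeal hq.symm
  have hsup (j : ι) : I.map (Pi.evalRingHom R j) ⊔ J.map (Pi.evalRingHom R j) =
      (q.asIdeal.comap (Pi.evalRingHom R i)).map (Pi.evalRingHom R j) := by
    rw [← map_sup, hP]
  refine ⟨i, Finset.ext fun j => ?_⟩
  rw [mem_inter, mem_properIndices, mem_properIndices, mem_singleton]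
  by_cases hj : j = i
  · subst hj
    have := hsup j
    rw [map_comap_of_surjective _ (Function.surjective_eval j)] at this
    refine iff_of_true ⟨fun h => q.2.ne_top ?_, fun h => q.2.ne_top ?_⟩ rfl
    · rw [← this, h, top_sup_eq]
    · rw [← this, h, sup_top_eq]
  · have := hsup j
    rw [map_evalRingHom_comap_evalRingHom_of_ne hj] at this
    exact iff_of_false (fun h => IsLocalRing.sup_ne_top h.1 h.2 this) hj

theorem eq_of_properIndices_eq_singleton {I J : Ideal (∀ i, R i)} {i : ι}
    (hI : properIndices I = {i}) (hJ : properIndices J = {i})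
    (h : I.map (Pi.evalRingHom R i) = J.map (Pi.evalRingHom R i)) : I = J := by
  refine piOrderIso.injective (funext fun j => ?_)
  by_cases hj : j = i
  · subst hj; exact h
  · have hI' : j ∉ properIndices I := by simp [hI, hj]
    have hJ' : j ∉ properIndices J := by simp [hJ, hj]
    rw [mem_properIndices, not_not] at hI' hJ'
    exact hI'.trans hJ'.symm

theorem card_le_two_of_properIndices_eq_singleton {i : ι} {M : Ideal (R i)}
    (hM : ∀ I : Ideal (R i), I ≠ ⊥ → I ≠ ⊤ → I = M) {t : Finset (Ideal (∀ i, R i))}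
    (ht : ∀ I ∈ t, properIndices I = {i}) : #t ≤ 2 := by
  classical
  calc #t ≤ #{⊥, M} := by
        refine card_le_card_of_injOn (fun I => I.map (Pi.evalRingHom R i)) (fun I hI => ?_)
          fun I hI J hJ => eq_of_properIndices_eq_singleton (ht I hI) (ht J hJ)
        have : I.map (Pi.evalRingHom R i) ≠ ⊤ := mem_properIndices.1 (by simp [ht I hI])
        by_cases hb : I.map (Pi.evalRingHom R i) = ⊥
        · simp [hb]
        · simp [hM _ hb this]
    _ ≤ 2 := card_le_two

end Ideal

open Ideal

theorem exists_isNClique_pis_of_injective {A κ : Type*} [CommRing A] [Fintype κ]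
    {f : κ → Ideal A} (hf : Function.Injective f) (hbot : ∀ k, f k ≠ ⊥)
    (htop : ∀ k, f k ≠ ⊤) (hprime : ∀ k l, k ≠ l → (f k ⊔ f l).IsPrime) :
    ∃ s, (PIS A).IsNClique (Fintype.card κ) s := by
  let v (k : κ) : {I : Ideal A // I ≠ ⊥ ∧ I ≠ ⊤} := ⟨f k, hbot k, htop k⟩
  have hv : Function.Injective v := fun k l he => hf (congrArg Subtype.val he)
  have hadj {k l : κ} (h : k ≠ l) : (PIS A).Adj (v k) (v l) :=
    ⟨hv.ne h, Submodule.add_eq_sup (f k) (f l) ▸ hprime k l h⟩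
  exact ⟨_, isNClique_map_copy_top (Hom.toCopy ⟨v, hadj⟩ hv)⟩

section PIS

variable {ι : Type*} [Fintype ι] [DecidableEq ι] {R : ι → Type*} [∀ i, CommRing (R i)]

theorem exists_properIndices_inter_eq_singleton_of_pis_adj [∀ i, IsLocalRing (R i)]
    {u v : {I : Ideal (∀ i, R i) // I ≠ ⊥ ∧ I ≠ ⊤}} (h : (PIS (∀ i, R i)).Adj u v) :
    ∃ i, properIndices u.1 ∩ properIndices v.1 = {i} :=
  exists_properIndices_inter_eq_singleton (Submodule.add_eq_sup u.1 v.1 ▸ h.2)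

theorem card_le_card_of_isClique_pis [∀ i, IsLocalRing (R i)]
    {s : Finset {I : Ideal (∀ i, R i) // I ≠ ⊥ ∧ I ≠ ⊤}}
    (hs : (PIS (∀ i, R i)).IsClique (s : Set _))
    (hsmall : ∀ u ∈ s, ∀ v ∈ s, u ≠ v →
      2 ≤ #(properIndices u.1) ∨ 2 ≤ #(properIndices v.1)) :
    #s ≤ Fintype.card ι := by
  have hinter (u v : s) (huv : u ≠ v) : #(properIndices u.1.1 ∩ properIndices v.1.1) = 1 := by
    obtain ⟨i, hi⟩ := exists_properIndices_inter_eq_singleton_of_pis_adj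
      (hs u.2 v.2 (Subtype.coe_ne_coe.2 huv))
    rw [hi, card_singleton]
  simpa using card_le_card_of_card_inter_eq_one (L := fun u : s => properIndices u.1.1)
    (fun u => properIndices_nonempty u.1.2.2)
    (fun u v huv => hsmall u u.2 v v.2 (Subtype.coe_ne_coe.2 huv)) hinter

theorem mem_properIndices_of_pis_adj [∀ i, IsLocalRing (R i)]
    {u v : {I : Ideal (∀ i, R i) // I ≠ ⊥ ∧ I ≠ ⊤}} (h : (PIS (∀ i, R i)).Adj u v)
    {i : ι} (hu : properIndices u.1 = {i}) : i ∈ properIndices v.1 := by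
  obtain ⟨k, hk⟩ := exists_properIndices_inter_eq_singleton_of_pis_adj h
  have hk' : k ∈ properIndices u.1 ∩ properIndices v.1 := hk ▸ mem_singleton_self k
  rw [mem_inter, hu, mem_singleton] at hk'
  exact hk'.1 ▸ hk'.2

theorem card_filter_card_properIndices_le_one_le_two [∀ i, IsLocalRing (R i)]
    (M : ∀ i, Ideal (R i)) (hM : ∀ i (I : Ideal (R i)), I ≠ ⊥ → I ≠ ⊤ → I = M i)
    {s : Finset {I : Ideal (∀ i, R i) // I ≠ ⊥ ∧ I ≠ ⊤}}
    (hs : (PIS (∀ i, R i)).IsClique (s : Set _)) :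
    #{u ∈ s | #(properIndices u.1) ≤ 1} ≤ 2 := by
  have hsingleton {u : {I : Ideal (∀ i, R i) // I ≠ ⊥ ∧ I ≠ ⊤}}
      (hu : #(properIndices u.1) ≤ 1) : ∃ i, properIndices u.1 = {i} :=
    card_eq_one.1 (by have := (properIndices_nonempty u.2.2).card_pos; omega)
  rcases eq_empty_or_nonempty {u ∈ s | #(properIndices u.1) ≤ 1} with h | ⟨w, hw⟩
  · rw [h, card_empty]; omega
  rw [mem_filter] at hw
  obtain ⟨i, hi⟩ := hsingleton hw.2
  have hall : ∀ u ∈ {u ∈ s | #(properIndices u.1) ≤ 1}, properIndices u.1 = {i} := by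
    intro u hu
    rw [mem_filter] at hu
    rcases eq_or_ne w u with rfl | hwu
    · exact hi
    obtain ⟨j, hj⟩ := hsingleton hu.2
    have hij := mem_properIndices_of_pis_adj (hs hw.1 hu.1 hwu) hi
    rw [hj, mem_singleton] at hij
    rw [hj, hij]
  rw [← card_map (Function.Embedding.subtype _)]
  exact card_le_two_of_properIndices_eq_singleton (hM i) (by simpa using hall)

theorem card_le_card_add_one_of_isClique_pis [∀ i, IsLocalRing (R i)] (M : ∀ i, Ideal (R i))
    (hM : ∀ i (I : Ideal (R i)), I ≠ ⊥ → I ≠ ⊤ → I = M i)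
    {s : Finset {I : Ideal (∀ i, R i) // I ≠ ⊥ ∧ I ≠ ⊤}}
    (hs : (PIS (∀ i, R i)).IsClique (s : Set _)) :
    #s ≤ Fintype.card ι + 1 := by
  set small := {u ∈ s | #(properIndices u.1) ≤ 1}
  set large := {u ∈ s | ¬ #(properIndices u.1) ≤ 1}
  have hsplit : #small + #large = #s := card_filter_add_card_filter_not _
  have hsmall : #small ≤ 2 := card_filter_card_properIndices_le_one_le_two M hM hs
  have two_le_of_mem_large {u} (hu : u ∈ large) : 2 ≤ #(properIndices u.1) := by
    have := (mem_filter.1 hu).2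
    omega
  rcases eq_empty_or_nonempty small with h | ⟨w, hw⟩
  · have := card_le_card_of_isClique_pis (s := large)
      (hs.subset (coe_subset.2 (filter_subset _ s))) fun u hu _ _ _ => .inl (two_le_of_mem_large hu)
    rw [h, card_empty] at hsplit
    omega
  · have hwl : w ∉ large := fun h' => (mem_filter.1 h').2 (mem_filter.1 hw).2
    have hsub : insert w large ⊆ s := insert_subset (mem_filter.1 hw).1 (filter_subset _ _)
    have := card_le_card_of_isClique_pis (hs.subset (coe_subset.2 hsub))
      fun u hu v hv huv => by
        rw [mem_insert] at hu hv
        rcases hu with rfl | hu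
        · exact .inr (two_le_of_mem_large (hv.resolve_left (Ne.symm huv)))
        · exact .inl (two_le_of_mem_large hu)
    rw [card_insert_of_notMem hwl] at this
    omega

theorem exists_isNClique_pis [Nontrivial ι] (M : ∀ i, Ideal (R i)) (hbot : ∀ i, M i ≠ ⊥)
    (hprime : ∀ i, (M i).IsPrime) :
    ∃ s, (PIS (∀ i, R i)).IsNClique (Fintype.card ι + 1) s := by
  obtain ⟨i₀⟩ : Nonempty ι := inferInstance
  obtain ⟨j₀, hj₀⟩ := exists_ne i₀
  -- Any two of the `T o` add up to the prime `P`; note that `T (some i₀) = P`.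
  let T : Option ι → ∀ j, Ideal (R j) := fun o j =>
    if j = i₀ then (if o = none then ⊥ else M j) else if o = some j then M j else ⊤
  let P : ∀ j, Ideal (R j) := fun j => if j = i₀ then M j else ⊤
  have hsup (o o' : Option ι) (h : o ≠ o') : T o ⊔ T o' = P := by
    funext j
    simp only [T, P, Pi.sup_apply]
    split_ifs <;> simp_all
  have hP (o : Option ι) (h : T o = P) : o = some i₀ := by
    cases o with
    | none => exact absurd (by simpa [T, P] using congrFun h i₀) (hbot i₀).symm
    | some k =>
      by_contra hk
      have hk : k ≠ i₀ := fun h => hk (h ▸ rfl)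
      exact (hprime k).ne_top (by simpa [T, P, hk] using congrFun h k)
  have hinj : Function.Injective fun o => pi (T o) := by
    intro o o' he
    by_contra h
    have hT : T o = T o' := pi_injective he
    have ho : T o = P := by rw [← hsup o o' h, hT, sup_idem]
    exact h ((hP o ho).trans (hP o' (hT ▸ ho)).symm)
  have hbt (j : ι) : (⊥ : Ideal (R j)) ≠ ⊤ := fun h => hbot j (eq_bot_iff.2 (h ▸ le_top))
  have hT_ne_bot (o : Option ι) : pi (T o) ≠ ⊥ := by
    cases o with
    | none => exact pi_ne_bot (i := j₀) (by simp [T, hj₀, (hbt j₀).symm])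
    | some k => exact pi_ne_bot (i := i₀) (by simp [T, hbot])
  have hT_ne_top (o : Option ι) : pi (T o) ≠ ⊤ :=
    pi_ne_top (i := i₀) (by cases o <;> simp [T, hbt, (hprime i₀).ne_top])
  simpa using exists_isNClique_pis_of_injective hinj hT_ne_bot hT_ne_top fun o o' h => by
    rw [pi_sup, hsup o o' h, pi_ite_eq_comap]
    exact IsPrime.comap _

end PIS

/-- If each `Rᵢ` is a local ring with unique nonzero proper ideal `Mᵢ`
(`n ≥ 2`), then the clique number of `PIS(R)` is `n + 1`. -/
theorem pis_cliqueNum_of_uniqueIdeal {n : ℕ} (hn : 2 ≤ n)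
    (R : Fin n → Type*) [∀ i, CommRing (R i)] (M : ∀ i, Ideal (R i))
    (hM : ∀ i, M i ≠ ⊥ ∧ M i ≠ ⊤ ∧
      ∀ I : Ideal (R i), I ≠ ⊥ → I ≠ ⊤ → I = M i) :
    (PIS (∀ i, R i)).cliqueNum = n + 1 := by
  have : Nontrivial (Fin n) := Fin.nontrivial_iff_two_le.2 hn
  have (i : Fin n) : IsLocalRing (R i) := isLocalRing_of_forall_eq (hM i).2.1 (hM i).2.2
  have hprime (i : Fin n) : (M i).IsPrime := (isMaximal_of_forall_eq (hM i).2.1 (hM i).2.2).isPrime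
  refine cliqueNum_eq_of_forall_card_le (fun s hs => ?_) ?_
  · simpa using card_le_card_add_one_of_isClique_pis M (fun i => (hM i).2.2) hs
  · simpa using exists_isNClique_pis M (fun i => (hM i).1) hprime
end
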